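/- arXiv:1312.1171 — 8 statements merged into one kernel-verified Lean document; each statement's English description precedes it below -/
import Mathlib

section
/- Let $(a_\ell)_{\ell \in \mathbb{N}_0}$ be a sequence of positive reals and let $s > 0$. If there exist $C > 0$ and $0 < \rho < 1$ with $a_{\ell+k}^2 \le C \rho^k a_\ell^2$ for all $k, \ell \in \mathbb{N}_0$, then $\sum_{k=0}^{\ell-1} a_k^{-1/s} \le C^{1/(2s)}(1 - \rho^{1/(2s)})^{-1} a_\ell^{-1/s}$ for all $\ell \in \mathbb{N}$. -/
/-!
Raising `a (ℓ + k) ^ 2 ≤ C ρ ^ k a ℓ ^ 2` to the power `-1/(2s)` turns R-linear convergence of `a`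
into geometric growth of `b ℓ := a ℓ ^ (-1/s)`: `b k ≤ C ^ (1/(2s)) q ^ (ℓ - k) b ℓ` with
`q = ρ ^ (1/(2s)) < 1`. Summing over `k < ℓ` and bounding the geometric series by `(1 - q)⁻¹`
gives the claim.
-/

open Finset

theorem Real.rpow_neg_le_mul_rpow_neg {u v c r : ℝ} (hu : 0 < u) (hv : 0 < v) (hc : 0 ≤ c)
    (hr : 0 ≤ r) (h : u ≤ c * v) : v ^ (-r) ≤ c ^ r * u ^ (-r) := by
  have hinv : v⁻¹ ≤ c * u⁻¹ := by
    rw [le_mul_inv_iff₀ hu, inv_mul_le_iff₀ hv, mul_comm]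
    exact h
  calc v ^ (-r) = v⁻¹ ^ r := by rw [Real.rpow_neg hv.le, Real.inv_rpow hv.le]
    _ ≤ (c * u⁻¹) ^ r := Real.rpow_le_rpow (inv_nonneg.2 hv.le) hinv hr
    _ = c ^ r * u ^ (-r) := by
      rw [Real.mul_rpow hc (inv_nonneg.2 hu.le), Real.inv_rpow hu.le, Real.rpow_neg hu.le]

theorem sum_range_pow_sub_le_inv_one_sub {q : ℝ} (hq0 : 0 ≤ q) (hq1 : q < 1) (ℓ : ℕ) :
    ∑ k ∈ range ℓ, q ^ (ℓ - k) ≤ (1 - q)⁻¹ :=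
  calc ∑ k ∈ range ℓ, q ^ (ℓ - k)
      ≤ ∑ k ∈ range ℓ, q ^ (ℓ - 1 - k) :=
        sum_le_sum fun _ _ => pow_le_pow_of_le_one hq0 hq1.le (by omega)
    _ = ∑ k ∈ range ℓ, q ^ k := sum_range_reflect (q ^ ·) ℓ
    _ ≤ (1 - q)⁻¹ := by
      simpa [← range_eq_Ico] using geom_sum_Ico_le_of_lt_one (m := 0) (n := ℓ) hq0 hq1

theorem sum_range_le_of_le_mul_pow_mul {b : ℕ → ℝ} {D q : ℝ} (hD : 0 ≤ D) (hq0 : 0 ≤ q)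
    (hq1 : q < 1) (h : ∀ k ℓ, b ℓ ≤ D * q ^ k * b (ℓ + k)) (ℓ : ℕ) (hb : 0 ≤ b ℓ) :
    ∑ k ∈ range ℓ, b k ≤ D * (1 - q)⁻¹ * b ℓ :=
  calc ∑ k ∈ range ℓ, b k
      ≤ ∑ k ∈ range ℓ, D * b ℓ * q ^ (ℓ - k) := sum_le_sum fun k hk => by
        have := h (ℓ - k) k
        rwa [Nat.add_sub_cancel' (mem_range.1 hk).le, mul_right_comm] at this
    _ = D * b ℓ * ∑ k ∈ range ℓ, q ^ (ℓ - k) := (mul_sum ..).symm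
    _ ≤ D * b ℓ * (1 - q)⁻¹ :=
        mul_le_mul_of_nonneg_left (sum_range_pow_sub_le_inv_one_sub hq0 hq1 ℓ) (mul_nonneg hD hb)
    _ = D * (1 - q)⁻¹ * b ℓ := mul_right_comm ..

/-- Lemma 4.7 (iii) ⟹ (ii): R-linear convergence implies inverse summability. -/
theorem Rlinear_implies_inverse_summability
    (a : ℕ → ℝ) (ha : ∀ ℓ, 0 < a ℓ) (s : ℝ) (hs : 0 < s)
    (C : ℝ) (hC : 0 < C) (ρ : ℝ) (hρ0 : 0 < ρ) (hρ1 : ρ < 1)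
    (hlin : ∀ k ℓ : ℕ, (a (ℓ + k)) ^ 2 ≤ C * ρ ^ k * (a ℓ) ^ 2) :
    ∀ ℓ : ℕ, 1 ≤ ℓ →
      ∑ k ∈ Finset.range ℓ, (a k) ^ (-(1 / s)) ≤
        C ^ (1 / (2 * s)) * (1 - ρ ^ (1 / (2 * s)))⁻¹ * (a ℓ) ^ (-(1 / s)) := by
  intro ℓ _
  set t := 1 / (2 * s) with ht_def
  have ht : 0 ≤ t := by positivity
  have hpow_sq : ∀ n, a n ^ (-(1 / s)) = (a n ^ 2) ^ (-t) := fun n => by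
    rw [← Real.rpow_natCast, ← Real.rpow_mul (ha n).le, ht_def]
    congr 1
    field_simp
    norm_num
  have hgrowth : ∀ k n, a n ^ (-(1 / s)) ≤ C ^ t * (ρ ^ t) ^ k * a (n + k) ^ (-(1 / s)) :=
    fun k n => by
      rw [hpow_sq, hpow_sq, ← Real.rpow_mul_natCast hρ0.le, mul_comm t,
        Real.rpow_natCast_mul hρ0.le, ← Real.mul_rpow hC.le (by positivity)]
      exact Real.rpow_neg_le_mul_rpow_neg (pow_pos (ha _) 2) (pow_pos (ha _) 2) (by positivity) ht
        (hlin k n)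
  exact sum_range_le_of_le_mul_pow_mul (Real.rpow_nonneg hC.le t) (Real.rpow_nonneg hρ0.le t)
    (Real.rpow_lt_one hρ0.le hρ1 (by positivity)) hgrowth ℓ (Real.rpow_nonneg (ha ℓ).le _)
end

section
/- Let $(a_\ell)_{\ell \in \mathbb{N}_0}$ be a sequence of positive reals and $s > 0$. If there exists $C > 0$ with $\sum_{k=0}^{\ell-1} a_k^{-1/s} \le C a_\ell^{-1/s}$ for all $\ell \in \mathbb{N}$, then for all $k, \ell \in \mathbb{N}_0$ it holds $a_{\ell+k}^2 \le (1+C)^{2s}(1+C^{-1})^{-2sk} a_\ell^2$; in particular the sequence converges R-linearly. -/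
/-!
With `bₘ = aₘ^(-1/s)` and partial sums `Sₘ = ∑_{i<m} bᵢ`, the hypothesis `Sₘ ≤ C bₘ` gives
`Sₘ₊₁ = Sₘ + bₘ ≥ (1 + C⁻¹) Sₘ`, so the partial sums grow geometrically. Hence
`(1 + C⁻¹)ᵏ b_ℓ ≤ (1 + C⁻¹)ᵏ S_{ℓ+1} ≤ S_{ℓ+k+1} ≤ (1 + C) b_{ℓ+k}`, and raising this to the
power `-2s` turns it into the claimed bound for `a² = b^(-2s)`.
-/

open Finset

theorem pow_mul_le_of_mul_le_succ {u : ℕ → ℝ} {q : ℝ} (hq : 0 ≤ q)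
    (h : ∀ m, q * u m ≤ u (m + 1)) (ℓ k : ℕ) : q ^ k * u ℓ ≤ u (ℓ + k) := by
  induction k with
  | zero => simp
  | succ k ih =>
    calc q ^ (k + 1) * u ℓ = q * (q ^ k * u ℓ) := by ring
      _ ≤ q * u (ℓ + k) := mul_le_mul_of_nonneg_left ih hq
      _ ≤ u (ℓ + (k + 1)) := h (ℓ + k)

section InverseSummable

variable {b : ℕ → ℝ} {C : ℝ}

theorem sum_range_le_mul_of_one_le (hb : ∀ m, 0 ≤ b m) (hC : 0 ≤ C)
    (h : ∀ m, 1 ≤ m → ∑ i ∈ range m, b i ≤ C * b m) (m : ℕ) :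
    ∑ i ∈ range m, b i ≤ C * b m := by
  rcases Nat.eq_zero_or_pos m with rfl | hm
  · simpa using mul_nonneg hC (hb 0)
  · exact h m hm

theorem one_add_inv_mul_sum_range_le (hC : 0 < C) (h : ∀ m, ∑ i ∈ range m, b i ≤ C * b m)
    (m : ℕ) : (1 + C⁻¹) * ∑ i ∈ range m, b i ≤ ∑ i ∈ range (m + 1), b i := by
  have hsum : C⁻¹ * ∑ i ∈ range m, b i ≤ b m := (inv_mul_le_iff₀ hC).2 (h m)
  rw [sum_range_succ]
  linarith

theorem one_add_inv_pow_mul_le (hb : ∀ m, 0 ≤ b m) (hC : 0 < C)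
    (h : ∀ m, 1 ≤ m → ∑ i ∈ range m, b i ≤ C * b m) (ℓ k : ℕ) :
    (1 + C⁻¹) ^ k * b ℓ ≤ (1 + C) * b (ℓ + k) := by
  have h' := sum_range_le_mul_of_one_le hb hC.le h
  calc (1 + C⁻¹) ^ k * b ℓ ≤ (1 + C⁻¹) ^ k * ∑ i ∈ range (ℓ + 1), b i := by
        gcongr
        exact single_le_sum (fun i _ => hb i) (self_mem_range_succ ℓ)
    _ ≤ ∑ i ∈ range (ℓ + 1 + k), b i :=
        pow_mul_le_of_mul_le_succ (by positivity) (one_add_inv_mul_sum_range_le hC h') _ k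
    _ = ∑ i ∈ range (ℓ + k), b i + b (ℓ + k) := by rw [Nat.add_right_comm, sum_range_succ]
    _ ≤ (1 + C) * b (ℓ + k) := by linarith [h' (ℓ + k)]

end InverseSummable

/-- Lemma 4.7 (ii) ⟹ (iii): inverse summability implies R-linear convergence with
`ρ = (1 + C⁻¹)⁻²ˢ` and `C' = (1 + C)²ˢ`. -/
theorem inverse_summability_implies_Rlinear
    (a : ℕ → ℝ) (ha : ∀ ℓ, 0 < a ℓ) (s : ℝ) (hs : 0 < s)
    (C : ℝ) (hC : 0 < C)
    (hinv : ∀ ℓ : ℕ, 1 ≤ ℓ →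
      ∑ k ∈ Finset.range ℓ, (a k) ^ (-(1 / s)) ≤ C * (a ℓ) ^ (-(1 / s))) :
    ∀ k ℓ : ℕ, (a (ℓ + k)) ^ 2 ≤
      (1 + C) ^ (2 * s) * ((1 + C⁻¹) ^ (-(2 * s))) ^ (k : ℕ) * (a ℓ) ^ 2 := by
  intro k ℓ
  set b : ℕ → ℝ := fun m => a m ^ (-(1 / s))
  have hb : ∀ m, 0 < b m := fun m => Real.rpow_pos_of_pos (ha m) _
  have hsq : ∀ m, a m ^ 2 = b m ^ (-(2 * s)) := fun m => by
    rw [← Real.rpow_mul (ha m).le, show -(1 / s) * -(2 * s) = 2 by field_simp, Real.rpow_two]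
  have hgrowth : (1 + C⁻¹) ^ k / (1 + C) * b ℓ ≤ b (ℓ + k) := by
    rw [div_mul_eq_mul_div, div_le_iff₀ (by positivity), mul_comm (b _)]
    exact one_add_inv_pow_mul_le (fun m => (hb m).le) hC hinv ℓ k
  calc a (ℓ + k) ^ 2 = b (ℓ + k) ^ (-(2 * s)) := hsq _
    _ ≤ ((1 + C⁻¹) ^ k / (1 + C) * b ℓ) ^ (-(2 * s)) :=
        Real.rpow_le_rpow_of_nonpos (mul_pos (by positivity) (hb ℓ)) hgrowth (by linarith)
    _ = (1 + C) ^ (2 * s) * ((1 + C⁻¹) ^ (-(2 * s))) ^ k * a ℓ ^ 2 := by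
        rw [hsq, Real.mul_rpow (by positivity) (hb ℓ).le,
          Real.div_rpow (by positivity) (by positivity),
          ← Real.rpow_pow_comm (by positivity : (0:ℝ) ≤ 1 + C⁻¹),
          Real.rpow_neg (by positivity : (0:ℝ) ≤ 1 + C)]
        field_simp
end

section
/- Let $(a_\ell)$, $(b_\ell)$ be sequences of nonnegative reals satisfying the estimator reduction $a_{\ell+1}^2 \le q a_\ell^2 + C_1 b_\ell^2$ with $0 < q < 1$, $C_1 > 0$, reliability $e_\ell \le C_2 a_\ell$ for a nonnegative sequence $(e_\ell)$, and the general quasi-orthogonality: there exist $0 \le \varepsilon < (1-q)/(C_2^2 C_1)$ and $C_3 > 0$ with $\sum_{k=\ell}^{N}(b_k^2 - \varepsilon e_k^2) \le C_3 a_\ell^2$ for all $N \ge \ell \ge 0$. Then there exists $C_4 > 0$ such that $\sum_{k=\ell+1}^{\infty} a_k^2 \le C_4 a_\ell^2$ for all $\ell$; in particular $(a_\ell)$ converges R-linearly to zero. -/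
/-!
Summing the estimator reduction over `k = ℓ, …, ℓ + n - 1`, and bounding `∑ b_k²` by
quasi-orthogonality and `∑ e_k²` by reliability, gives with `μ = q + C₁ ε C₂² < 1`
`∑_{k<n} a_{ℓ+k+1}² ≤ μ ∑_{k<n} a_{ℓ+k}² + C₁ C₃ a_ℓ²`.
The left side is at least `∑_{k<n} a_{ℓ+k}² - a_ℓ²`, so the partial sums of the tail are bounded
by `(1 + C₁ C₃) / (1 - μ) · a_ℓ²` uniformly in `n`.
-/

open Finset

theorem sum_Icc_add_eq_sum_range {M : Type*} [AddCommMonoid M] (f : ℕ → M) (ℓ n : ℕ) :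
    ∑ k ∈ Icc ℓ (ℓ + n), f k = ∑ k ∈ range (n + 1), f (ℓ + k) := by
  rw [← Ico_add_one_right_eq_Icc, sum_Ico_eq_sum_range, Nat.add_assoc, Nat.add_sub_cancel_left]

theorem sum_range_le_of_sum_range_shift_le {x : ℕ → ℝ} {μ c : ℝ} (hx : ∀ k, 0 ≤ x k)
    (hμ : μ < 1) {ℓ n : ℕ}
    (h : ∑ k ∈ range n, x (ℓ + k + 1) ≤ μ * ∑ k ∈ range n, x (ℓ + k) + c * x ℓ) :
    ∑ k ∈ range n, x (ℓ + k) ≤ (1 + c) / (1 - μ) * x ℓ := by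
  have hsucc : ∑ k ∈ range (n + 1), x (ℓ + k) = ∑ k ∈ range n, x (ℓ + k + 1) + x ℓ :=
    sum_range_succ' _ _
  have hmono : ∑ k ∈ range n, x (ℓ + k) ≤ ∑ k ∈ range (n + 1), x (ℓ + k) := by
    rw [sum_range_succ]
    linarith [hx (ℓ + n)]
  rw [div_mul_eq_mul_div, le_div_iff₀ (sub_pos.2 hμ)]
  linarith

theorem sum_range_sq_shift_le {a b e : ℕ → ℝ} {q C₁ C₂ ε C₃ : ℝ} (he : ∀ k, 0 ≤ e k)
    (hC₁ : 0 ≤ C₁) (hε : 0 ≤ ε) (hred : ∀ k, a (k + 1) ^ 2 ≤ q * a k ^ 2 + C₁ * b k ^ 2)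
    (hrel : ∀ k, e k ≤ C₂ * a k) {ℓ n : ℕ}
    (hqo : ∑ k ∈ range n, (b (ℓ + k) ^ 2 - ε * e (ℓ + k) ^ 2) ≤ C₃ * a ℓ ^ 2) :
    ∑ k ∈ range n, a (ℓ + k + 1) ^ 2 ≤
      (q + C₁ * ε * C₂ ^ 2) * ∑ k ∈ range n, a (ℓ + k) ^ 2 + C₁ * C₃ * a ℓ ^ 2 := by
  set A := ∑ k ∈ range n, a (ℓ + k) ^ 2
  have hreduction :
      ∑ k ∈ range n, a (ℓ + k + 1) ^ 2 ≤ q * A + C₁ * ∑ k ∈ range n, b (ℓ + k) ^ 2 := by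
    rw [mul_sum, mul_sum, ← sum_add_distrib]
    exact sum_le_sum fun k _ => hred (ℓ + k)
  have hreliability : ∑ k ∈ range n, e (ℓ + k) ^ 2 ≤ C₂ ^ 2 * A := by
    rw [mul_sum]
    refine sum_le_sum fun k _ => ?_
    rw [← mul_pow]
    exact pow_le_pow_left₀ (he _) (hrel _) 2
  have hbsum : ∑ k ∈ range n, b (ℓ + k) ^ 2 ≤ C₃ * a ℓ ^ 2 + ε * (C₂ ^ 2 * A) := by
    rw [sum_sub_distrib, ← mul_sum] at hqo
    linarith [mul_le_mul_of_nonneg_left hreliability hε]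
  linarith [mul_le_mul_of_nonneg_left hbsum hC₁]

theorem quasi_orthogonality_implies_tail_summability_general
    (a b e : ℕ → ℝ) (he : ∀ ℓ, 0 ≤ e ℓ)
    (q C₁ C₂ : ℝ) (hC₁ : 0 < C₁) (hC₂ : 0 < C₂)
    (hred : ∀ ℓ, (a (ℓ + 1)) ^ 2 ≤ q * (a ℓ) ^ 2 + C₁ * (b ℓ) ^ 2)
    (hrel : ∀ ℓ, e ℓ ≤ C₂ * a ℓ)
    (hqo : ∃ ε C₃ : ℝ, 0 ≤ ε ∧ ε < (1 - q) / (C₂ ^ 2 * C₁) ∧ 0 < C₃ ∧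
      ∀ ℓ N : ℕ, ℓ ≤ N →
        ∑ k ∈ Finset.Icc ℓ N, ((b k) ^ 2 - ε * (e k) ^ 2) ≤ C₃ * (a ℓ) ^ 2) :
    ∃ C₄ > 0, ∀ ℓ : ℕ, Summable (fun k : ℕ => (a (ℓ + 1 + k)) ^ 2) ∧
      (∑' k : ℕ, (a (ℓ + 1 + k)) ^ 2) ≤ C₄ * (a ℓ) ^ 2 := by
  obtain ⟨ε, C₃, hε, hεlt, hC₃, hqo⟩ := hqo
  have hμ : q + C₁ * ε * C₂ ^ 2 < 1 := by
    have := (lt_div_iff₀ (by positivity)).1 hεlt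
    linarith
  have hgap := sub_pos.2 hμ
  refine ⟨(1 + C₁ * C₃) / (1 - (q + C₁ * ε * C₂ ^ 2)), by positivity, fun ℓ => ?_⟩
  have hqo_range (n : ℕ) :
      ∑ k ∈ range n, (b (ℓ + k) ^ 2 - ε * e (ℓ + k) ^ 2) ≤ C₃ * a ℓ ^ 2 := by
    cases n with
    | zero => rw [sum_range_zero]; positivity
    | succ n => simpa only [sum_Icc_add_eq_sum_range] using hqo ℓ (ℓ + n) (by omega)
  have hpartial (n : ℕ) : ∑ k ∈ range n, a (ℓ + 1 + k) ^ 2 ≤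
      (1 + C₁ * C₃) / (1 - (q + C₁ * ε * C₂ ^ 2)) * a ℓ ^ 2 :=
    calc ∑ k ∈ range n, a (ℓ + 1 + k) ^ 2 ≤ ∑ k ∈ range (n + 1), a (ℓ + k) ^ 2 := by
          simp only [sum_range_succ', ← Nat.add_assoc, Nat.add_right_comm ℓ 1, Nat.add_zero]
          linarith [sq_nonneg (a ℓ)]
      _ ≤ _ := sum_range_le_of_sum_range_shift_le (fun _ => sq_nonneg _) hμ
          (sum_range_sq_shift_le he hC₁.le hε hred hrel (hqo_range _))
  exact ⟨summable_of_sum_range_le (fun _ => sq_nonneg _) hpartial,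
    Real.tsum_le_of_sum_range_le (fun _ => sq_nonneg _) hpartial⟩

/-- Proposition 4.8 (abstract version): estimator reduction, reliability and general
quasi-orthogonality imply uniform summability (hence R-linear convergence) of the
estimator sequence. -/
theorem quasi_orthogonality_implies_tail_summability
    (a b e : ℕ → ℝ) (ha : ∀ ℓ, 0 ≤ a ℓ) (hb : ∀ ℓ, 0 ≤ b ℓ) (he : ∀ ℓ, 0 ≤ e ℓ)
    (q C₁ C₂ : ℝ) (hq0 : 0 < q) (hq1 : q < 1) (hC₁ : 0 < C₁) (hC₂ : 0 < C₂)
    (hred : ∀ ℓ, (a (ℓ + 1)) ^ 2 ≤ q * (a ℓ) ^ 2 + C₁ * (b ℓ) ^ 2)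
    (hrel : ∀ ℓ, e ℓ ≤ C₂ * a ℓ)
    (hqo : ∃ ε C₃ : ℝ, 0 ≤ ε ∧ ε < (1 - q) / (C₂ ^ 2 * C₁) ∧ 0 < C₃ ∧
      ∀ ℓ N : ℕ, ℓ ≤ N →
        ∑ k ∈ Finset.Icc ℓ N, ((b k) ^ 2 - ε * (e k) ^ 2) ≤ C₃ * (a ℓ) ^ 2) :
    ∃ C₄ > 0, ∀ ℓ : ℕ, Summable (fun k : ℕ => (a (ℓ + 1 + k)) ^ 2) ∧
      (∑' k : ℕ, (a (ℓ + 1 + k)) ^ 2) ≤ C₄ * (a ℓ) ^ 2 :=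
  quasi_orthogonality_implies_tail_summability_general a b e he q C₁ C₂ hC₁ hC₂ hred hrel hqo
end

section
/- Let $(a_\ell)$, $(b_\ell)$, $(e_\ell)$ be sequences of nonnegative reals. Suppose reliability $e_\ell \le C_{rel} a_\ell$, the quasi-triangle inequality $C_\Delta^{-1} b_\ell \le e_{\ell+1} + e_\ell$ (for constants $C_{rel}, C_\Delta > 0$), and uniform summability $\sum_{k=\ell+1}^{\infty} a_k^2 \le C a_\ell^2$ for all $\ell$. Then there exists $C' > 0$ with $\sum_{k=\ell}^{N} b_k^2 \le C' a_\ell^2$ for all $N \ge \ell \ge 0$, i.e., the general quasi-orthogonality holds with $\varepsilon = 0$. -/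
/-!
Since `e` is controlled by `a` through reliability, the quasi-triangle inequality gives
`b ℓ ^ 2 ≲ a (ℓ + 1) ^ 2 + a ℓ ^ 2`. Summing over `ℓ ≤ k ≤ N`, both resulting sums of squares of
the estimator are bounded by `a ℓ ^ 2` thanks to the uniform summability of its tail.
-/

open Finset

lemma sq_le_two_mul_sq_mul_add_sq {x y z c : ℝ} (hx : 0 ≤ x) (h : x ≤ c * (y + z)) :
    x ^ 2 ≤ 2 * c ^ 2 * (y ^ 2 + z ^ 2) :=
  calc x ^ 2 ≤ (c * (y + z)) ^ 2 := pow_le_pow_left₀ hx h 2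
    _ = c ^ 2 * (y + z) ^ 2 := by ring
    _ ≤ c ^ 2 * (2 * (y ^ 2 + z ^ 2)) := by gcongr; exact add_sq_le
    _ = 2 * c ^ 2 * (y ^ 2 + z ^ 2) := by ring

lemma sum_Icc_le_tsum_add {f : ℕ → ℝ} (hf : ∀ k, 0 ≤ f k) {n : ℕ}
    (hs : Summable fun k => f (n + k)) (m : ℕ) :
    ∑ k ∈ Icc n m, f k ≤ ∑' k, f (n + k) := by
  rw [← Ico_add_one_right_eq_Icc, sum_Ico_eq_sum_range]
  exact hs.sum_le_tsum _ fun k _ => hf _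

section TailBound

variable {a : ℕ → ℝ} {C : ℝ}

lemma sum_Icc_sq_le_of_tail (htail : ∀ ℓ m, ∑ k ∈ Icc (ℓ + 1) m, a k ^ 2 ≤ C * a ℓ ^ 2)
    {ℓ N : ℕ} (hℓN : ℓ ≤ N) :
    ∑ k ∈ Icc ℓ N, a k ^ 2 ≤ (1 + C) * a ℓ ^ 2 := by
  rw [Icc_eq_cons_Ioc hℓN, sum_cons, ← Icc_add_one_left_eq_Ioc]
  linarith [htail ℓ N]

lemma sum_Icc_sq_succ_le_of_tail (htail : ∀ ℓ m, ∑ k ∈ Icc (ℓ + 1) m, a k ^ 2 ≤ C * a ℓ ^ 2)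
    (ℓ N : ℕ) :
    ∑ k ∈ Icc ℓ N, a (k + 1) ^ 2 ≤ C * a ℓ ^ 2 := by
  have hshift : ∑ k ∈ Icc ℓ N, a (k + 1) ^ 2 = ∑ k ∈ Icc (ℓ + 1) (N + 1), a k ^ 2 := by
    rw [← map_add_right_Icc, sum_map]
    rfl
  exact hshift ▸ htail ℓ (N + 1)

end TailBound

theorem tail_summability_implies_quasi_orthogonality_general
    (a b e : ℕ → ℝ) (hb : ∀ ℓ, 0 ≤ b ℓ)
    (Crel CΔ C : ℝ) (hCrel : 0 < Crel) (hCΔ : 0 < CΔ) (hC : 0 < C)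
    (hrel : ∀ ℓ, e ℓ ≤ Crel * a ℓ)
    (htri : ∀ ℓ, CΔ⁻¹ * b ℓ ≤ e (ℓ + 1) + e ℓ)
    (hsum : ∀ ℓ, Summable (fun k : ℕ => (a (ℓ + 1 + k)) ^ 2))
    (hbound : ∀ ℓ, (∑' k : ℕ, (a (ℓ + 1 + k)) ^ 2) ≤ C * (a ℓ) ^ 2) :
    ∃ C' > 0, ∀ ℓ N : ℕ, ℓ ≤ N →
      ∑ k ∈ Finset.Icc ℓ N, (b k) ^ 2 ≤ C' * (a ℓ) ^ 2 := by
  have htail : ∀ ℓ m, ∑ k ∈ Icc (ℓ + 1) m, a k ^ 2 ≤ C * a ℓ ^ 2 := fun ℓ m =>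
    (sum_Icc_le_tsum_add (fun k => sq_nonneg (a k)) (hsum ℓ) m).trans (hbound ℓ)
  have hb_le : ∀ k, b k ≤ CΔ * Crel * (a (k + 1) + a k) := fun k => by
    rw [mul_assoc, ← inv_mul_le_iff₀ hCΔ]
    linarith [htri k, hrel k, hrel (k + 1)]
  set K := 2 * (CΔ * Crel) ^ 2
  refine ⟨K * (1 + 2 * C), by positivity, fun ℓ N hℓN => ?_⟩
  calc ∑ k ∈ Icc ℓ N, b k ^ 2 ≤ ∑ k ∈ Icc ℓ N, K * (a (k + 1) ^ 2 + a k ^ 2) :=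
        sum_le_sum fun k _ => sq_le_two_mul_sq_mul_add_sq (hb k) (hb_le k)
    _ = K * (∑ k ∈ Icc ℓ N, a (k + 1) ^ 2 + ∑ k ∈ Icc ℓ N, a k ^ 2) := by
        rw [← mul_sum, sum_add_distrib]
    _ ≤ K * (C * a ℓ ^ 2 + (1 + C) * a ℓ ^ 2) := by
        gcongr
        exacts [sum_Icc_sq_succ_le_of_tail htail ℓ N, sum_Icc_sq_le_of_tail htail hℓN]
    _ = K * (1 + 2 * C) * a ℓ ^ 2 := by ring

/-- Proposition 4.10 (abstract version): reliability, a quasi-triangle bound and uniform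
summability of the estimator imply the general quasi-orthogonality with `ε = 0`. -/
theorem tail_summability_implies_quasi_orthogonality
    (a b e : ℕ → ℝ) (ha : ∀ ℓ, 0 ≤ a ℓ) (hb : ∀ ℓ, 0 ≤ b ℓ) (he : ∀ ℓ, 0 ≤ e ℓ)
    (Crel CΔ C : ℝ) (hCrel : 0 < Crel) (hCΔ : 0 < CΔ) (hC : 0 < C)
    (hrel : ∀ ℓ, e ℓ ≤ Crel * a ℓ)
    (htri : ∀ ℓ, CΔ⁻¹ * b ℓ ≤ e (ℓ + 1) + e ℓ)
    (hsum : ∀ ℓ, Summable (fun k : ℕ => (a (ℓ + 1 + k)) ^ 2))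
    (hbound : ∀ ℓ, (∑' k : ℕ, (a (ℓ + 1 + k)) ^ 2) ≤ C * (a ℓ) ^ 2) :
    ∃ C' > 0, ∀ ℓ N : ℕ, ℓ ≤ N →
      ∑ k ∈ Finset.Icc ℓ N, (b k) ^ 2 ≤ C' * (a ℓ) ^ 2 :=
  tail_summability_implies_quasi_orthogonality_general a b e hb Crel CΔ C hCrel hCΔ hC hrel htri
    hsum hbound
end

section
/- Let $\eta_T \ge 0$ for $T$ in a finite index set $\mathcal{T}$, partitioned into refined elements $\mathcal{R} \subseteq \mathcal{T}$ and unrefined $\mathcal{T} \setminus \mathcal{R}$, and let $\hat\eta_T \ge 0$ for $T$ in $\hat{\mathcal{T}}$ with $\mathcal{T} \cap \hat{\mathcal{T}} = \mathcal{T} \setminus \mathcal{R}$. Let $\eta^2 = \sum_{T \in \mathcal{T}} \eta_T^2$, $\hat\eta^2 = \sum_{T \in \hat{\mathcal{T}}} \hat\eta_T^2$, $d \ge 0$. Assume: (reduction) $\sum_{T \in \hat{\mathcal{T}} \setminus \mathcal{T}} \hat\eta_T^2 \le q \sum_{T \in \mathcal{R}} \eta_T^2 + C_{red} d^2$ with $0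 < q < 1$, (stability) $\big(\sum_{T \in \mathcal{T} \cap \hat{\mathcal{T}}} \hat\eta_T^2\big)^{1/2} \le \big(\sum_{T \in \mathcal{T} \cap \hat{\mathcal{T}}} \eta_T^2\big)^{1/2} + C_{stab} d$, and (Dörfler marking) $\theta \eta^2 \le \sum_{T \in \mathcal{R}} \eta_T^2$ with $0 < \theta \le 1$. Then for every $\delta > 0$: $\hat\eta^2 \le (1+\delta)(1 - (1-q)\theta) \eta^2 + (C_{red} + (1 + \delta^{-1}) C_{stab}^2) d^2$. -/
/-!
The refined elements disappear from the new mesh, so `η̂²` splits into the sum over the new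
elements, bounded by the reduction estimate, and the sum over the kept elements `𝒯 \ ℛ`.
On the kept elements, squaring the stability estimate with Young's inequality
`(a + b)² ≤ (1 + δ) a² + (1 + δ⁻¹) b²` costs a factor `1 + δ`. What is left is
`q ∑_ℛ η² + (1 + δ) ∑_{𝒯 \ ℛ} η² ≤ (1 + δ) (η² - (1 - q) ∑_ℛ η²)`, and Dörfler marking
bounds `∑_ℛ η²` from below by `θ η²`.
-/

open Finset

theorem add_sq_le_one_add_mul_sq_add {δ : ℝ} (hδ : 0 < δ) (a b : ℝ) :
    (a + b) ^ 2 ≤ (1 + δ) * a ^ 2 + (1 + δ⁻¹) * b ^ 2 := by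
  have hyoung : 2 * a * b ≤ δ * a ^ 2 + δ⁻¹ * b ^ 2 := by
    have hsq : 0 ≤ (δ * a - b) ^ 2 / δ := by positivity
    have hexpand : (δ * a - b) ^ 2 / δ = δ * a ^ 2 + δ⁻¹ * b ^ 2 - 2 * a * b := by
      field_simp
      ring
    linarith
  nlinarith

theorem le_of_sqrt_le_sqrt_add {x y c δ : ℝ} (hx : 0 ≤ x) (hy : 0 ≤ y)
    (h : Real.sqrt x ≤ Real.sqrt y + c) (hδ : 0 < δ) :
    x ≤ (1 + δ) * y + (1 + δ⁻¹) * c ^ 2 :=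
  calc x = Real.sqrt x ^ 2 := (Real.sq_sqrt hx).symm
    _ ≤ (Real.sqrt y + c) ^ 2 := pow_le_pow_left₀ (Real.sqrt_nonneg x) h 2
    _ ≤ (1 + δ) * Real.sqrt y ^ 2 + (1 + δ⁻¹) * c ^ 2 := add_sq_le_one_add_mul_sq_add hδ _ _
    _ = (1 + δ) * y + (1 + δ⁻¹) * c ^ 2 := by rw [Real.sq_sqrt hy]

theorem mul_add_one_add_mul_sub_le_of_doerfler {A B q θ δ : ℝ} (hB : 0 ≤ B) (hq0 : 0 ≤ q)
    (hq1 : q ≤ 1) (hδ : 0 ≤ δ) (hdoerfler : θ * A ≤ B) :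
    q * B + (1 + δ) * (A - B) ≤ (1 + δ) * (1 - (1 - q) * θ) * A := by
  have hmarked : q * B + (A - B) ≤ (1 - (1 - q) * θ) * A := by
    nlinarith [mul_le_mul_of_nonneg_left hdoerfler (sub_nonneg.2 hq1)]
  have hqB : q * B ≤ (1 + δ) * (q * B) := le_mul_of_one_le_left (mul_nonneg hq0 hB) (by linarith)
  nlinarith [mul_le_mul_of_nonneg_left hmarked (by linarith : (0 : ℝ) ≤ 1 + δ)]

theorem sum_eq_sum_sdiff_add_sum_inter {α : Type*} [DecidableEq α] (s t : Finset α)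
    (f : α → ℝ) : ∑ x ∈ t, f x = ∑ x ∈ t \ s, f x + ∑ x ∈ s ∩ t, f x := by
  rw [← sum_sdiff (inter_subset_left : t ∩ s ⊆ t), sdiff_inter_self_left, inter_comm]

theorem estimator_reduction_general
    {α : Type*} [DecidableEq α]
    (T That R : Finset α) (hR : R ⊆ T) (hcap : T ∩ That = T \ R)
    (ηT ηhatT : α → ℝ)
    (d q Cred Cstab θ : ℝ) (hq0 : 0 < q) (hq1 : q < 1)
    (hreduction : ∑ x ∈ That \ T, (ηhatT x) ^ 2 ≤
      q * ∑ x ∈ R, (ηT x) ^ 2 + Cred * d ^ 2)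
    (hstability : Real.sqrt (∑ x ∈ T ∩ That, (ηhatT x) ^ 2) ≤
      Real.sqrt (∑ x ∈ T ∩ That, (ηT x) ^ 2) + Cstab * d)
    (hdoerfler : θ * ∑ x ∈ T, (ηT x) ^ 2 ≤ ∑ x ∈ R, (ηT x) ^ 2) :
    ∀ δ : ℝ, 0 < δ →
      ∑ x ∈ That, (ηhatT x) ^ 2 ≤
        (1 + δ) * (1 - (1 - q) * θ) * ∑ x ∈ T, (ηT x) ^ 2
          + (Cred + (1 + δ⁻¹) * Cstab ^ 2) * d ^ 2 := by
  intro δ hδ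
  have hkept : ∑ x ∈ T ∩ That, (ηT x) ^ 2 = ∑ x ∈ T, (ηT x) ^ 2 - ∑ x ∈ R, (ηT x) ^ 2 := by
    rw [hcap, eq_sub_iff_add_eq, sum_sdiff hR]
  have hstable := le_of_sqrt_le_sqrt_add (sum_nonneg fun x _ => sq_nonneg (ηhatT x))
    (sum_nonneg fun x _ => sq_nonneg (ηT x)) hstability hδ
  have hmarked := mul_add_one_add_mul_sub_le_of_doerfler
    (sum_nonneg fun x _ => sq_nonneg (ηT x)) hq0.le hq1.le hδ.le hdoerfler
  rw [sum_eq_sum_sdiff_add_sum_inter T That]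
  rw [hkept] at hstable
  linarith

/-- Lemma 4.5 (estimator reduction): stability on non-refined elements, reduction on
refined elements and Dörfler marking imply the estimator reduction estimate. -/
theorem estimator_reduction
    {α : Type*} [DecidableEq α]
    (T That R : Finset α) (hR : R ⊆ T) (hcap : T ∩ That = T \ R)
    (ηT ηhatT : α → ℝ) (hη : ∀ x, 0 ≤ ηT x) (hηhat : ∀ x, 0 ≤ ηhatT x)
    (d q Cred Cstab θ : ℝ) (hd : 0 ≤ d) (hq0 : 0 < q) (hq1 : q < 1)
    (hCred : 0 < Cred) (hCstab : 0 < Cstab) (hθ0 : 0 < θ) (hθ1 : θ ≤ 1)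
    (hreduction : ∑ x ∈ That \ T, (ηhatT x) ^ 2 ≤
      q * ∑ x ∈ R, (ηT x) ^ 2 + Cred * d ^ 2)
    (hstability : Real.sqrt (∑ x ∈ T ∩ That, (ηhatT x) ^ 2) ≤
      Real.sqrt (∑ x ∈ T ∩ That, (ηT x) ^ 2) + Cstab * d)
    (hdoerfler : θ * ∑ x ∈ T, (ηT x) ^ 2 ≤ ∑ x ∈ R, (ηT x) ^ 2) :
    ∀ δ : ℝ, 0 < δ →
      ∑ x ∈ That, (ηhatT x) ^ 2 ≤
        (1 + δ) * (1 - (1 - q) * θ) * ∑ x ∈ T, (ηT x) ^ 2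
          + (Cred + (1 + δ⁻¹) * Cstab ^ 2) * d ^ 2 :=
  estimator_reduction_general T That R hR hcap ηT ηhatT d q Cred Cstab θ hq0 hq1 hreduction
    hstability hdoerfler
end

section
/- Under the setup of the previous estimator reduction (finite index sets $\mathcal{T}, \hat{\mathcal{T}}$ with squared local contributions), assume: (stability) $\eta^2 \le \sum_{T \in \mathcal{T}\setminus\hat{\mathcal{T}}} \eta_T^2 + (1+\delta)\sum_{T \in \mathcal{T}\cap\hat{\mathcal{T}}} \hat\eta_T^2 + (1+\delta^{-1}) C_{stab}^2 d^2$ for all $\delta > 0$, (discrete reliability) $d^2 \le C_{drel}^2 \sum_{T \in \mathcal{R}} \eta_T^2$ for a set $\mathcal{R} \supseteq \mathcal{T}\setminus\hat{\mathcal{T}}$, and (contraction) $\hat\eta^2 \le \kappa_0 \eta^2$ with $0 < \kappa_0 < 1$. Then for every $\delta > 0$, $\frac{1 - (1+\delta)\kappa_0}{1 + (1+\delta^{-1}) C_{stab}^2 C_{drel}^2}\,\eta^2 \le \sum_{T \in \mathcal{R}} \eta_T^2$. In particular, for every $0 < \theta_0 < \theta_\star := (1 + C_{stab}^2 C_{drel}^2)^{-1}$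 there exists $0 < \kappa_0 < 1$ such that $\hat\eta^2 \le \kappa_0 \eta^2$ implies the Dörfler marking $\theta_0 \eta^2 \le \sum_{T \in \mathcal{R}} \eta_T^2$. -/
/-!
Feeding discrete reliability `d² ≤ Cdrel² ∑_R η_T²`, the bound `∑_{T \ That} η_T² ≤ ∑_R η_T²` and the
contraction `∑_{T ∩ That} η̂_T² ≤ κ₀ η²` into the stability estimate gives
`(1 - (1 + δ) κ₀) η² ≤ (1 + (1 + δ⁻¹) Cstab² Cdrel²) ∑_R η_T²`.
For `θ₀ < (1 + C)⁻¹` with `C = Cstab² Cdrel²`, taking `δ` large makes the factor `1 + (1 + δ⁻¹) C`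
close to `1 + C`, and then `κ₀` small enough keeps the left-hand factor above `θ₀` times it.
-/

open Finset

theorem stability_drel_contraction_bound {η ρ e f d Cstab Cdrel κ δ : ℝ} (hδ : 0 < δ)
    (hstab : η ≤ e + (1 + δ) * f + (1 + δ⁻¹) * Cstab ^ 2 * d ^ 2)
    (he : e ≤ ρ) (hf : f ≤ κ * η) (hdrel : d ^ 2 ≤ Cdrel ^ 2 * ρ) :
    (1 - (1 + δ) * κ) / (1 + (1 + δ⁻¹) * Cstab ^ 2 * Cdrel ^ 2) * η ≤ ρ := by
  have hcoupling : (1 + δ⁻¹) * Cstab ^ 2 * d ^ 2 ≤ (1 + δ⁻¹) * Cstab ^ 2 * (Cdrel ^ 2 * ρ) :=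
    mul_le_mul_of_nonneg_left hdrel (by positivity)
  have hreduced : (1 + δ) * f ≤ (1 + δ) * (κ * η) :=
    mul_le_mul_of_nonneg_left hf (by positivity)
  rw [div_mul_eq_mul_div, div_le_iff₀ (by positivity)]
  linarith

theorem exists_doerfler_factor_le {θ C : ℝ} (hθ : 0 < θ) (hC : 0 ≤ C) (hθC : θ < (1 + C)⁻¹) :
    ∃ δ > 0, ∃ κ, 0 < κ ∧ κ < 1 ∧ θ ≤ (1 - (1 + δ) * κ) / (1 + (1 + δ⁻¹) * C) := by
  set g := 1 - θ * (1 + C)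
  have hg : 0 < g := by
    rw [← one_div, lt_div_iff₀ (by positivity)] at hθC
    linarith
  have hg_lt_one : g < 1 := by
    have : 0 < θ * (1 + C) := by positivity
    linarith
  -- `δ` is large enough that the stability overhead `θ C / δ` costs at most half of the gap `g`
  set δ := 1 + 2 * θ * C / g
  have hδ : 0 < δ := by positivity
  have hoverhead : θ * C * δ⁻¹ ≤ g / 2 := by
    have : g * δ = g + 2 * θ * C := by rw [mul_add, mul_div_cancel₀ _ hg.ne', mul_one]
    rw [← div_eq_mul_inv, div_le_iff₀ hδ]
    linarith
  refine ⟨δ, hδ, g / (2 * (1 + δ)), by positivity, ?_, ?_⟩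
  · rw [div_lt_one (by positivity)]
    linarith
  · have hcontraction : (1 + δ) * (g / (2 * (1 + δ))) = g / 2 := by field_simp
    rw [le_div_iff₀ (by positivity), hcontraction]
    linarith

theorem doerfler_optimality_general
    {α : Type*} [DecidableEq α]
    (T That R : Finset α) (hR₁ : T \ That ⊆ R)
    (ηT ηhatT : α → ℝ)
    (d Cstab Cdrel : ℝ)
    (hstability : ∀ δ : ℝ, 0 < δ →
      ∑ x ∈ T, (ηT x) ^ 2 ≤ ∑ x ∈ T \ That, (ηT x) ^ 2
        + (1 + δ) * ∑ x ∈ T ∩ That, (ηhatT x) ^ 2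
        + (1 + δ⁻¹) * Cstab ^ 2 * d ^ 2)
    (hdrel : d ^ 2 ≤ Cdrel ^ 2 * ∑ x ∈ R, (ηT x) ^ 2) :
    (∀ κ₀ : ℝ, 0 < κ₀ → κ₀ < 1 →
      (∑ x ∈ That, (ηhatT x) ^ 2 ≤ κ₀ * ∑ x ∈ T, (ηT x) ^ 2) →
      ∀ δ : ℝ, 0 < δ →
        (1 - (1 + δ) * κ₀) / (1 + (1 + δ⁻¹) * Cstab ^ 2 * Cdrel ^ 2)
            * ∑ x ∈ T, (ηT x) ^ 2 ≤ ∑ x ∈ R, (ηT x) ^ 2) ∧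
    (∀ θ₀ : ℝ, 0 < θ₀ → θ₀ < (1 + Cstab ^ 2 * Cdrel ^ 2)⁻¹ →
      ∃ κ₀ : ℝ, 0 < κ₀ ∧ κ₀ < 1 ∧
        ((∑ x ∈ That, (ηhatT x) ^ 2 ≤ κ₀ * ∑ x ∈ T, (ηT x) ^ 2) →
          θ₀ * ∑ x ∈ T, (ηT x) ^ 2 ≤ ∑ x ∈ R, (ηT x) ^ 2)) := by
  have hbound (κ₀ : ℝ) (hcontr : ∑ x ∈ That, (ηhatT x) ^ 2 ≤ κ₀ * ∑ x ∈ T, (ηT x) ^ 2)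
      (δ : ℝ) (hδ : 0 < δ) :
      (1 - (1 + δ) * κ₀) / (1 + (1 + δ⁻¹) * Cstab ^ 2 * Cdrel ^ 2)
        * ∑ x ∈ T, (ηT x) ^ 2 ≤ ∑ x ∈ R, (ηT x) ^ 2 :=
    stability_drel_contraction_bound hδ (hstability δ hδ)
      (sum_le_sum_of_subset_of_nonneg hR₁ fun _ _ _ ↦ sq_nonneg _)
      ((sum_le_sum_of_subset_of_nonneg inter_subset_right fun _ _ _ ↦ sq_nonneg _).trans hcontr)
      hdrel
  refine ⟨fun κ₀ _ _ ↦ hbound κ₀, fun θ₀ hθ₀ hθ₀_lt ↦ ?_⟩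
  obtain ⟨δ, hδ, κ₀, hκ₀, hκ₀_lt, hθκ⟩ := exists_doerfler_factor_le hθ₀ (by positivity) hθ₀_lt
  rw [← mul_assoc] at hθκ
  exact ⟨κ₀, hκ₀, hκ₀_lt, fun hcontr ↦
    (mul_le_mul_of_nonneg_right hθκ (sum_nonneg fun _ _ ↦ sq_nonneg _)).trans
      (hbound κ₀ hcontr δ hδ)⟩

/-- Proposition 4.12 (optimality of Dörfler marking): estimator contraction between a
mesh and its refinement implies the Dörfler criterion for the refined elements, for
marking parameters below the threshold `θ⋆ = (1 + Cstab² Cdrel²)⁻¹`. -/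
theorem doerfler_optimality
    {α : Type*} [DecidableEq α]
    (T That R : Finset α) (hR₁ : T \ That ⊆ R) (hR₂ : R ⊆ T)
    (ηT ηhatT : α → ℝ) (hη : ∀ x, 0 ≤ ηT x) (hηhat : ∀ x, 0 ≤ ηhatT x)
    (d Cstab Cdrel : ℝ) (hd : 0 ≤ d) (hCstab : 0 < Cstab) (hCdrel : 0 < Cdrel)
    (hstability : ∀ δ : ℝ, 0 < δ →
      ∑ x ∈ T, (ηT x) ^ 2 ≤ ∑ x ∈ T \ That, (ηT x) ^ 2
        + (1 + δ) * ∑ x ∈ T ∩ That, (ηhatT x) ^ 2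
        + (1 + δ⁻¹) * Cstab ^ 2 * d ^ 2)
    (hdrel : d ^ 2 ≤ Cdrel ^ 2 * ∑ x ∈ R, (ηT x) ^ 2) :
    (∀ κ₀ : ℝ, 0 < κ₀ → κ₀ < 1 →
      (∑ x ∈ That, (ηhatT x) ^ 2 ≤ κ₀ * ∑ x ∈ T, (ηT x) ^ 2) →
      ∀ δ : ℝ, 0 < δ →
        (1 - (1 + δ) * κ₀) / (1 + (1 + δ⁻¹) * Cstab ^ 2 * Cdrel ^ 2)
            * ∑ x ∈ T, (ηT x) ^ 2 ≤ ∑ x ∈ R, (ηT x) ^ 2) ∧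
    (∀ θ₀ : ℝ, 0 < θ₀ → θ₀ < (1 + Cstab ^ 2 * Cdrel ^ 2)⁻¹ →
      ∃ κ₀ : ℝ, 0 < κ₀ ∧ κ₀ < 1 ∧
        ((∑ x ∈ That, (ηhatT x) ^ 2 ≤ κ₀ * ∑ x ∈ T, (ηT x) ^ 2) →
          θ₀ * ∑ x ∈ T, (ηT x) ^ 2 ≤ ∑ x ∈ R, (ηT x) ^ 2)) :=
  doerfler_optimality_general T That R hR₁ ηT ηhatT d Cstab Cdrel hstability hdrel
end

section
/- Let $V$ be a real Hilbert space with inner product $a(\cdot,\cdot)$ and $b(\cdot,\cdot)$ a second inner product on $V$. Let $v, \hat v \in V$ with $b(v,v) = b(\hat v, \hat v) = 1$, $\mu := a(v,v)$, $\hat\mu := a(\hat v, \hat v)$, and suppose the discrete eigenvalue relation $a(\hat v, w) = \hat\mu\, b(\hat v, w)$ holds for $w = \hat v - v$. Then $a(\hat v - v, \hat v - v) = \mu - \hat\mu + \hat\mu\, b(\hat v - v, \hat v - v)$. In particular, if $\hat\mu \le \mu$ then $a(\hat v - v, \hat v - v) \ge \mu - \hat\mu \ge 0$. -/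
theorem LinearMap.BilinForm.IsSymm.apply_sub_sub_eq {R M : Type*} [CommRing R] [AddCommGroup M]
    [Module R M] {B : LinearMap.BilinForm R M} (hB : B.IsSymm) (x y : M) :
    B (x - y) (x - y) = B y y - B x x + 2 * B x (x - y) := by
  have hxy : B y x = B x y := hB.eq y x
  simp only [map_sub, LinearMap.sub_apply, hxy]
  ring

/-- Equation (8.2) of the eigenvalue lemma: relation between the energy distance of
normalized discrete eigenvectors and the difference of discrete eigenvalues. -/
theorem eigenvalue_energy_identity
    {V : Type*} [AddCommGroup V] [Module ℝ V]
    (a b : LinearMap.BilinForm ℝ V) (ha : a.IsSymm) (hb : b.IsSymm)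
    (hbpos : ∀ w : V, 0 ≤ b w w)
    (v vhat : V) (hbv : b v v = 1) (hbvhat : b vhat vhat = 1)
    (μ μhat : ℝ) (hμ : μ = a v v) (hμhat : μhat = a vhat vhat)
    (heig : a vhat (vhat - v) = μhat * b vhat (vhat - v)) :
    a (vhat - v) (vhat - v) = μ - μhat + μhat * b (vhat - v) (vhat - v) ∧
    (μhat ≤ μ → 0 ≤ μhat →
      μ - μhat ≤ a (vhat - v) (vhat - v) ∧ 0 ≤ μ - μhat) := by
  have hb_dist : b (vhat - v) (vhat - v) = 2 * b vhat (vhat - v) := by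
    rw [hb.apply_sub_sub_eq, hbv, hbvhat]
    ring
  have identity : a (vhat - v) (vhat - v) = μ - μhat + μhat * b (vhat - v) (vhat - v) := by
    rw [ha.apply_sub_sub_eq, heig, hb_dist, ← hμ, ← hμhat]
    ring
  refine ⟨identity, fun hle hμhat_nonneg => ⟨?_, sub_nonneg.mpr hle⟩⟩
  rw [identity]
  exact le_add_of_nonneg_right (mul_nonneg hμhat_nonneg (hbpos _))
end

section
/- Let $\eta, \tilde\eta, \eta_T, \tilde\eta_T \ge 0$ (for $T$ in a finite set $\mathcal{T}$, with $\eta^2 = \sum_T \eta_T^2$, $\tilde\eta^2 = \sum_T \tilde\eta_T^2$) and suppose: (i) $(1 - \vartheta C_{stab})\tilde\eta \le \eta \le (1 + \vartheta C_{stab})\tilde\eta$ and, componentwise over any subset $\mathcal{M} \subseteq \mathcal{T}$, the Young-type bound $\sum_{T\in\mathcal{M}} \eta_T^2 \le (1+\delta)\sum_{T\in\mathcal{M}} \tilde\eta_T^2 + (1+\delta^{-1})\vartheta^2 C_{stab}^2 \tilde\eta^2$ for all $\delta > 0$, where $0 < \vartheta C_{stab} < 1$. If $\theta_1 \eta^2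 \le \sum_{T\in\mathcal{M}} \eta_T^2$ for some $0 < \theta_1 \le 1$, and $0 < \theta_2 \le \sup_{\delta > 0} \frac{(1 - \vartheta C_{stab})^2\theta_1 - (1+\delta^{-1})\vartheta^2 C_{stab}^2}{1+\delta}$ with the supremum positive, then $\theta_2 \tilde\eta^2 \le \sum_{T\in\mathcal{M}} \tilde\eta_T^2$. -/
/-!
Squaring the lower estimator equivalence gives `(1 - ϑC)² η̃² ≤ η²`. Combined with the marking
`θ₁ η² ≤ η(M)²` and the Young-type bound for `M`, this yields, for every `δ > 0`,
`((1 - ϑC)² θ₁ - (1 + δ⁻¹) ϑ² C²) η̃² ≤ (1 + δ) η̃(M)²`; so every element of the set whose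
supremum bounds `θ₂` is at most `η̃(M)² / η̃²`.
-/

open Finset

lemma sq_mul_le_of_mul_sqrt_le_sqrt {a b c : ℝ} (hc : 0 ≤ c) (ha : 0 ≤ a) (hb : 0 ≤ b)
    (h : c * √a ≤ √b) : c ^ 2 * a ≤ b := by
  have := (Real.le_sqrt (mul_nonneg hc (Real.sqrt_nonneg a)) hb).mp h
  rwa [mul_pow, Real.sq_sqrt ha] at this

lemma bulk_transfer {E F e f c θ δ κ : ℝ} (hθ : 0 ≤ θ) (hlow : c ^ 2 * F ≤ E)
    (hmark : θ * E ≤ e) (hyoung : e ≤ (1 + δ) * f + κ * F) :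
    (c ^ 2 * θ - κ) * F ≤ (1 + δ) * f := by
  nlinarith [mul_le_mul_of_nonneg_left hlow hθ]

lemma mul_le_of_le_sSup_of_forall_mul_le {S : Set ℝ} {θ A B : ℝ} (hθ : θ ≤ sSup S)
    (hS : ∀ y ∈ S, y * A ≤ B) (hA : 0 ≤ A) (hB : 0 ≤ B) : θ * A ≤ B := by
  rcases hA.eq_or_lt with rfl | hA
  · simpa using hB
  have hsup : sSup S ≤ B / A :=
    Real.sSup_le (fun y hy => (le_div_iff₀ hA).mpr (hS y hy)) (div_nonneg hB hA.le)
  calc θ * A ≤ B / A * A := mul_le_mul_of_nonneg_right (hθ.trans hsup) hA.le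
    _ = B := div_mul_cancel₀ B hA.ne'

theorem doerfler_marking_inexact_general
    {α : Type*}
    (T M : Finset α) (hM : M ⊆ T)
    (ηT ηtT : α → ℝ)
    (ϑ Cstab : ℝ) (hϑ1 : ϑ * Cstab < 1)
    (hequiv₁ : (1 - ϑ * Cstab) * Real.sqrt (∑ x ∈ T, (ηtT x) ^ 2) ≤
      Real.sqrt (∑ x ∈ T, (ηT x) ^ 2))
    (hyoung : ∀ M' : Finset α, M' ⊆ T → ∀ δ : ℝ, 0 < δ →
      ∑ x ∈ M', (ηT x) ^ 2 ≤ (1 + δ) * ∑ x ∈ M', (ηtT x) ^ 2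
        + (1 + δ⁻¹) * ϑ ^ 2 * Cstab ^ 2 * ∑ x ∈ T, (ηtT x) ^ 2)
    (θ₁ θ₂ : ℝ) (hθ₁0 : 0 < θ₁)
    (hmark : θ₁ * ∑ x ∈ T, (ηT x) ^ 2 ≤ ∑ x ∈ M, (ηT x) ^ 2)
    (hθ₂ : θ₂ ≤ sSup {y : ℝ | ∃ δ : ℝ, 0 < δ ∧
      y = ((1 - ϑ * Cstab) ^ 2 * θ₁ - (1 + δ⁻¹) * ϑ ^ 2 * Cstab ^ 2) / (1 + δ)}) :
    θ₂ * ∑ x ∈ T, (ηtT x) ^ 2 ≤ ∑ x ∈ M, (ηtT x) ^ 2 := by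
  have hlow := sq_mul_le_of_mul_sqrt_le_sqrt (sub_nonneg.mpr hϑ1.le)
    (sum_nonneg fun x _ => sq_nonneg (ηtT x)) (sum_nonneg fun x _ => sq_nonneg (ηT x))
    hequiv₁
  refine mul_le_of_le_sSup_of_forall_mul_le hθ₂ ?_ (sum_nonneg fun x _ => sq_nonneg _)
    (sum_nonneg fun x _ => sq_nonneg _)
  rintro y ⟨δ, hδ, rfl⟩
  rw [div_mul_eq_mul_div, div_le_iff₀' (by linarith)]
  exact bulk_transfer hθ₁0.le hlow hmark (by simpa only [mul_assoc] using hyoung M hM δ hδ)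

/-- Lemma 6.4(ii): equivalence of Dörfler marking between the exact estimator `η` and
its inexact-solver perturbation `η̃`. -/
theorem doerfler_marking_inexact
    {α : Type*} [DecidableEq α]
    (T M : Finset α) (hM : M ⊆ T)
    (ηT ηtT : α → ℝ) (hη : ∀ x, 0 ≤ ηT x) (hηt : ∀ x, 0 ≤ ηtT x)
    (ϑ Cstab : ℝ) (hϑ : 0 < ϑ * Cstab) (hϑ1 : ϑ * Cstab < 1)
    (hequiv₁ : (1 - ϑ * Cstab) * Real.sqrt (∑ x ∈ T, (ηtT x) ^ 2) ≤
      Real.sqrt (∑ x ∈ T, (ηT x) ^ 2))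
    (hequiv₂ : Real.sqrt (∑ x ∈ T, (ηT x) ^ 2) ≤
      (1 + ϑ * Cstab) * Real.sqrt (∑ x ∈ T, (ηtT x) ^ 2))
    (hyoung : ∀ M' : Finset α, M' ⊆ T → ∀ δ : ℝ, 0 < δ →
      ∑ x ∈ M', (ηT x) ^ 2 ≤ (1 + δ) * ∑ x ∈ M', (ηtT x) ^ 2
        + (1 + δ⁻¹) * ϑ ^ 2 * Cstab ^ 2 * ∑ x ∈ T, (ηtT x) ^ 2)
    (θ₁ θ₂ : ℝ) (hθ₁0 : 0 < θ₁) (hθ₁1 : θ₁ ≤ 1)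
    (hmark : θ₁ * ∑ x ∈ T, (ηT x) ^ 2 ≤ ∑ x ∈ M, (ηT x) ^ 2)
    (hsuppos : 0 < sSup {y : ℝ | ∃ δ : ℝ, 0 < δ ∧
      y = ((1 - ϑ * Cstab) ^ 2 * θ₁ - (1 + δ⁻¹) * ϑ ^ 2 * Cstab ^ 2) / (1 + δ)})
    (hθ₂0 : 0 < θ₂)
    (hθ₂ : θ₂ ≤ sSup {y : ℝ | ∃ δ : ℝ, 0 < δ ∧
      y = ((1 - ϑ * Cstab) ^ 2 * θ₁ - (1 + δ⁻¹) * ϑ ^ 2 * Cstab ^ 2) / (1 + δ)}) :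
    θ₂ * ∑ x ∈ T, (ηtT x) ^ 2 ≤ ∑ x ∈ M, (ηtT x) ^ 2 :=
  doerfler_marking_inexact_general T M hM ηT ηtT ϑ Cstab hϑ1 hequiv₁ hyoung θ₁ θ₂ hθ₁0 hmark hθ₂
end
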